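/- Assume B(z) is constant with value B and φ is a gauge function. For m, n ∈ ℕ let ψ_n(w) = w^n·e^{−B|w|²−iφ(w)} and let Ã be the creation operator (Ãf)(z) = −(∂f/∂z)(z) + conj(S(z))·f(z). Then the function Ã^m ψ_n is an eigenfunction of the magnetic Schrödinger operator with eigenvalue B(2m+1): L(Ã^m ψ_n) = B(2m+1)·(Ã^m ψ_n). -/

import Mathlib

noncomputable section

open Complex

/-- The group `G = 𝕋 ⋉ ℂ`, with elements `[a,b]`, acting on `ℂ` by `z ↦ a z + b`. -/
@[ext]
structure GT : Type where
  a : Circle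
  b : ℂ

namespace GT

instance : Group GT where
  mul g h := ⟨g.a * h.a, (g.a : ℂ) * h.b + g.b⟩
  one := ⟨1, 0⟩
  inv g := ⟨g.a⁻¹, -((g.a⁻¹ : ℂ) * g.b)⟩
  mul_assoc g h k := by
    refine GT.ext (mul_assoc _ _ _) ?_
    show ((g.a * h.a : Circle) : ℂ) * k.b + ((g.a : ℂ) * h.b + g.b)
        = (g.a : ℂ) * ((h.a : ℂ) * k.b + h.b) + g.b
    push_cast; ring
  one_mul g := by
    refine GT.ext (one_mul _) ?_
    show ((1 : Circle) : ℂ) * g.b + 0 = g.b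
    simp
  mul_one g := by
    refine GT.ext (mul_one _) ?_
    show (g.a : ℂ) * 0 + g.b = g.b
    simp
  inv_mul_cancel g := by
    refine GT.ext (inv_mul_cancel _) ?_
    show ((g.a⁻¹ : Circle) : ℂ) * g.b + -(((g.a : ℂ))⁻¹ * g.b) = 0
    push_cast; ring

/-- The action of `G` on `ℂ` : `[a,b]·z = a z + b`. -/
def act (g : GT) (z : ℂ) : ℂ := (g.a : ℂ) * z + g.b

end GT

/-- The Hermitian product `⟨z,w⟩ = z·conj w`. -/
def herm (z w : ℂ) : ℂ := z * (starRingEnd ℂ) w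

/-- The automorphic factor `j^α(g,z) = exp(2 i α Im⟨z, g⁻¹·0⟩)`. -/
def jfac (α : ℝ) (g : GT) (z : ℂ) : ℂ :=
  Complex.exp (2 * Complex.I * (α : ℂ) * ((herm z (GT.act g⁻¹ 0)).im : ℂ))

/-- The Wirtinger derivative `∂f/∂z = (1/2)(∂f/∂x − i ∂f/∂y)`. -/
def wderiv (f : ℂ → ℂ) (z : ℂ) : ℂ :=
  (1 / 2 : ℂ) * (fderiv ℝ f z 1 - Complex.I * fderiv ℝ f z Complex.I)

/-- The anti-Wirtinger derivative `∂f/∂z̄ = (1/2)(∂f/∂x + i ∂f/∂y)`. -/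
def wderivBar (f : ℂ → ℂ) (z : ℂ) : ℂ :=
  (1 / 2 : ℂ) * (fderiv ℝ f z 1 + Complex.I * fderiv ℝ f z Complex.I)

/-- The Euclidean Laplacian `Δ = 4 ∂²/∂z∂z̄`. -/
def lap (f : ℂ → ℂ) (z : ℂ) : ℂ := 4 * wderiv (fun w => wderivBar f w) z

/-- `S(z) = ν z + μ (τ(z)·∂τ̄/∂z̄(z) − τ̄(z)·∂τ/∂z̄(z))`. -/
def Sfun (ν μ : ℝ) (τ : ℂ → ℂ) (z : ℂ) : ℂ :=
  (ν : ℂ) * z + (μ : ℂ) *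
    (τ z * wderivBar (fun w => (starRingEnd ℂ) (τ w)) z - (starRingEnd ℂ) (τ z) * wderivBar τ z)

/-- `B(z) = ν + μ(|∂τ/∂z(z)|² − |∂τ/∂z̄(z)|²)`. -/
def Bfun (ν μ : ℝ) (τ : ℂ → ℂ) (z : ℂ) : ℝ :=
  ν + μ * (‖wderiv τ z‖ ^ 2 - ‖wderivBar τ z‖ ^ 2)

/-- The magnetic Schrödinger operator `L`. -/
def Lop (ν μ : ℝ) (τ : ℂ → ℂ) (f : ℂ → ℂ) (z : ℂ) : ℂ :=
  - wderiv (fun w => wderivBar f w) z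
    - (Sfun ν μ τ z * wderiv f z - (starRingEnd ℂ) (Sfun ν μ τ z) * wderivBar f z)
    + ((‖Sfun ν μ τ z‖ : ℂ)) ^ 2 * f z
    - ((μ : ℂ) / 4) *
        (τ z * lap (fun w => (starRingEnd ℂ) (τ w)) z - (starRingEnd ℂ) (τ z) * lap τ z) * f z

/-- The annihilation operator `A f = ∂f/∂z̄ + S f`. -/
def Aop (ν μ : ℝ) (τ : ℂ → ℂ) (f : ℂ → ℂ) (z : ℂ) : ℂ :=
  wderivBar f z + Sfun ν μ τ z * f z

/-- The creation operator `Ã f = −∂f/∂z + conj(S) f`. -/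
def Atop (ν μ : ℝ) (τ : ℂ → ℂ) (f : ℂ → ℂ) (z : ℂ) : ℂ :=
  - wderiv f z + (starRingEnd ℂ) (Sfun ν μ τ z) * f z

/-- `J(g,z) = j^ν(g,z)·j^μ(ρ(g),τ(z))`. -/
def Jfun (ν μ : ℝ) (ρ : GT → GT) (τ : ℂ → ℂ) (g : GT) (z : ℂ) : ℂ :=
  jfac ν g z * jfac μ (ρ g) (τ z)

/-- `φ_ρ(g,g') = Im(ν⟨g⁻¹·0,g'·0⟩ + μ⟨ρ(g⁻¹)·0, ρ(g')·0⟩)`. -/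
def phiRho (ν μ : ℝ) (ρ : GT → GT) (g g' : GT) : ℝ :=
  ((ν : ℂ) * herm (GT.act g⁻¹ 0) (GT.act g' 0)
    + (μ : ℂ) * herm (GT.act (ρ g⁻¹) 0) (GT.act (ρ g') 0)).im

/-- Membership in the lattice `Γ = ℤω₁ + ℤω₂`. -/
def inLattice (ω₁ ω₂ : ℂ) (γ : ℂ) : Prop := ∃ m n : ℤ, γ = (m : ℂ) * ω₁ + (n : ℂ) * ω₂

/-- Mixed `Γ`-automorphic form of type `(ν,μ)` w.r.t. the pair `(ρ,τ)`. -/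
def MixedForm (ν μ : ℝ) (ρ : GT → GT) (τ : ℂ → ℂ) (ω₁ ω₂ : ℂ) (F : ℂ → ℂ) : Prop :=
  ContDiff ℝ (⊤ : ℕ∞) F ∧ ∀ γ : ℂ, inLattice ω₁ ω₂ γ → ∀ z : ℂ,
    F (z + γ) = jfac (-ν) ⟨(1 : Circle), γ⟩ z * jfac (-μ) (ρ ⟨(1 : Circle), γ⟩) (τ z) * F z

/-- The Laguerre polynomial `L_k`. -/
def laguerre (k : ℕ) (x : ℝ) : ℝ :=
  ∑ j ∈ Finset.range (k + 1), (-1) ^ j * (k.choose j : ℝ) * x ^ j / (Nat.factorial j : ℝ)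


/-- The multiplier `χ_τ(γ) = exp(iφ(γ) − 2iμ Im⟨τ(0), ρ([1,γ])⁻¹·0⟩)`. -/
def chiTau (μ : ℝ) (ρ : GT → GT) (τ : ℂ → ℂ) (φ : ℂ → ℝ) (γ : ℂ) : ℂ :=
  Complex.exp (Complex.I * (φ γ : ℂ)
    - 2 * Complex.I * (μ : ℂ) * ((herm (τ 0) (GT.act (ρ ⟨1, γ⟩)⁻¹ 0)).im : ℂ))

/-- The eigenprojector kernel `K_k`. -/
def Kker (B : ℝ) (φ : ℂ → ℝ) (k : ℕ) (z w : ℂ) : ℂ :=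
  ((2 * B / Real.pi : ℝ) : ℂ) * Complex.exp (-Complex.I * ((φ z - φ w : ℝ) : ℂ)) *
    Complex.exp (2 * Complex.I * (B : ℂ) * ((herm z w).im : ℂ)) *
    Complex.exp (-((B * ‖z - w‖ ^ 2 : ℝ) : ℂ)) *
    ((laguerre k (2 * B * ‖z - w‖ ^ 2) : ℝ) : ℂ)

/-- The kernel `K^σ_ξ;k`. -/
def Kxi (σ : ℝ) (ξ : ℂ) (k : ℕ) (z w : ℂ) : ℂ :=
  ((2 * σ / Real.pi : ℝ) : ℂ) * Complex.exp (2 * Complex.I * ((herm (z - w) ξ).im : ℂ)) *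
    Complex.exp (2 * Complex.I * (σ : ℂ) * ((herm z w).im : ℂ)) *
    Complex.exp (-((σ * ‖z - w‖ ^ 2 : ℝ) : ℂ)) *
    ((laguerre k (2 * σ * ‖z - w‖ ^ 2) : ℝ) : ℂ)

/-- `m`-fold iterate of the creation operator `Ã`. -/
def AtopIter (ν μ : ℝ) (τ : ℂ → ℂ) (m : ℕ) (f : ℂ → ℂ) : ℂ → ℂ :=
  (fun u z => Atop ν μ τ u z)^[m] f

/-!
With `A = ∂̄ + S` and `Ã = -∂ + S̄`, a direct computation gives `L = Ã A + B` and `[A, Ã] = 2B`.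
Both rest on `∂S = B + (μ/4)(τ Δτ̄ - τ̄ Δτ)`, whose second summand is purely imaginary, together
with the commutation of `∂` and `∂̄` on smooth functions. The gauge condition says exactly that
`∂̄ψ_n = -S ψ_n`, i.e. `A ψ_n = 0`; the relation `[A, Ã] = 2B` then gives
`Ã A (Ã^m ψ_n) = 2mB · Ã^m ψ_n` by induction on `m`, and `L = Ã A + B` finishes.
-/

open scoped ContDiff ComplexConjugate

section WirtingerCalculus

variable {f g : ℂ → ℂ} {z : ℂ}

theorem wderiv_add (hf : DifferentiableAt ℝ f z) (hg : DifferentiableAt ℝ g z) :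
    wderiv (fun w => f w + g w) z = wderiv f z + wderiv g z := by
  simp [wderiv, fderiv_fun_add hf hg]; ring

theorem wderivBar_add (hf : DifferentiableAt ℝ f z) (hg : DifferentiableAt ℝ g z) :
    wderivBar (fun w => f w + g w) z = wderivBar f z + wderivBar g z := by
  simp [wderivBar, fderiv_fun_add hf hg]; ring

theorem wderiv_sub (hf : DifferentiableAt ℝ f z) (hg : DifferentiableAt ℝ g z) :
    wderiv (fun w => f w - g w) z = wderiv f z - wderiv g z := by
  simp [wderiv, fderiv_fun_sub hf hg]; ring

theorem wderivBar_sub (hf : DifferentiableAt ℝ f z) (hg : DifferentiableAt ℝ g z) :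
    wderivBar (fun w => f w - g w) z = wderivBar f z - wderivBar g z := by
  simp [wderivBar, fderiv_fun_sub hf hg]; ring

theorem wderiv_const_mul (c : ℂ) (hf : DifferentiableAt ℝ f z) :
    wderiv (fun w => c * f w) z = c * wderiv f z := by
  simp [wderiv, fderiv_const_mul hf c]; ring

theorem wderivBar_const_mul (c : ℂ) (hf : DifferentiableAt ℝ f z) :
    wderivBar (fun w => c * f w) z = c * wderivBar f z := by
  simp [wderivBar, fderiv_const_mul hf c]; ring

theorem wderivBar_neg :
    wderivBar (fun w => -f w) z = -wderivBar f z := by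
  simp [wderivBar, fderiv_fun_neg]; ring

theorem wderiv_mul (hf : DifferentiableAt ℝ f z) (hg : DifferentiableAt ℝ g z) :
    wderiv (fun w => f w * g w) z = wderiv f z * g z + f z * wderiv g z := by
  simp [wderiv, fderiv_fun_mul hf hg]; ring

theorem wderivBar_mul (hf : DifferentiableAt ℝ f z) (hg : DifferentiableAt ℝ g z) :
    wderivBar (fun w => f w * g w) z = wderivBar f z * g z + f z * wderivBar g z := by
  simp [wderivBar, fderiv_fun_mul hf hg]; ring

theorem wderiv_id : wderiv (fun w => w) z = 1 := by
  simp [wderiv]; norm_num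

theorem wderivBar_id : wderivBar (fun w => w) z = 0 := by
  simp [wderivBar]

theorem fderiv_conj_apply (v : ℂ) :
    fderiv ℝ (fun w => conj (f w)) z v = conj (fderiv ℝ f z v) :=
  congrArg (· v) (conjCLE.comp_fderiv (f := f) (x := z))

theorem wderiv_conj :
    wderiv (fun w => conj (f w)) z = conj (wderivBar f z) := by
  simp only [wderiv, wderivBar, fderiv_conj_apply, map_mul, map_add, map_div₀, map_one,
    map_ofNat, conj_I]
  ring

theorem wderivBar_conj :
    wderivBar (fun w => conj (f w)) z = conj (wderiv f z) := by
  simp only [wderiv, wderivBar, fderiv_conj_apply, map_mul, map_sub, map_div₀, map_one,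
    map_ofNat, conj_I]
  ring

theorem wderivBar_conj_id : wderivBar (fun w => conj w) z = 1 := by
  rw [wderivBar_conj, wderiv_id, map_one]

theorem wderivBar_eq_zero_of_differentiableAt (hf : DifferentiableAt ℂ f z) :
    wderivBar f z = 0 := by
  have hI : fderiv ℝ f z I = I * fderiv ℝ f z 1 := by
    rw [(hf.hasFDerivAt.restrictScalars ℝ).fderiv]
    simp
  rw [wderivBar, hI, ← mul_assoc, I_mul_I]; ring

theorem wderivBar_exp (hg : DifferentiableAt ℝ g z) :
    wderivBar (fun w => exp (g w)) z = exp (g z) * wderivBar g z := by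
  simp [wderivBar, hg.hasFDerivAt.cexp.fderiv]; ring

end WirtingerCalculus

section Smoothness

variable {f : ℂ → ℂ}

theorem contDiff_fderiv_apply (hf : ContDiff ℝ ∞ f) (v : ℂ) :
    ContDiff ℝ ∞ (fun z => fderiv ℝ f z v) :=
  (hf.fderiv_right le_rfl).clm_apply contDiff_const

theorem contDiff_wderiv (hf : ContDiff ℝ ∞ f) : ContDiff ℝ ∞ (wderiv f) :=
  contDiff_const.mul ((contDiff_fderiv_apply hf 1).sub
    (contDiff_const.mul (contDiff_fderiv_apply hf I)))

theorem contDiff_wderivBar (hf : ContDiff ℝ ∞ f) : ContDiff ℝ ∞ (wderivBar f) :=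
  contDiff_const.mul ((contDiff_fderiv_apply hf 1).add
    (contDiff_const.mul (contDiff_fderiv_apply hf I)))

theorem contDiff_conj {n : WithTop ℕ∞} (hf : ContDiff ℝ n f) :
    ContDiff ℝ n (fun z => conj (f z)) :=
  conjCLE.contDiff.comp hf

end Smoothness

section Schwarz

variable {f : ℂ → ℂ}

theorem fderiv_linearCombination_fderiv_apply (hf : ContDiff ℝ 2 f) (a b z u : ℂ) :
    fderiv ℝ (fun w => a * fderiv ℝ f w 1 + b * fderiv ℝ f w I) z u
      = a * fderiv ℝ (fderiv ℝ f) z u 1 + b * fderiv ℝ (fderiv ℝ f) z u I := by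
  have hD : HasFDerivAt (fderiv ℝ f) (fderiv ℝ (fderiv ℝ f) z) z :=
    ((hf.fderiv_right (m := 1) le_rfl).differentiable one_ne_zero z).hasFDerivAt
  have h := ((hD.clm_apply (hasFDerivAt_const 1 z)).const_mul a).fun_add
    ((hD.clm_apply (hasFDerivAt_const I z)).const_mul b)
  rw [h.fderiv]
  simp

theorem wderiv_wderivBar_comm (hf : ContDiff ℝ 2 f) (z : ℂ) :
    wderiv (wderivBar f) z = wderivBar (wderiv f) z := by
  have hsymm := (hf.contDiffAt (x := z)).isSymmSndFDerivAt (by simp) 1 I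
  have hbar : wderivBar f = fun w => (1 / 2) * fderiv ℝ f w 1 + I / 2 * fderiv ℝ f w I := by
    ext w; rw [wderivBar]; ring
  have hdel : wderiv f = fun w => (1 / 2) * fderiv ℝ f w 1 + -I / 2 * fderiv ℝ f w I := by
    ext w; rw [wderiv]; ring
  rw [wderiv, wderivBar, hbar, hdel]
  simp only [fderiv_linearCombination_fderiv_apply hf, hsymm]
  ring

end Schwarz

section MagneticOperators

variable {ν μ : ℝ} {τ f : ℂ → ℂ} {z : ℂ}

theorem contDiff_Sfun (hτ : ContDiff ℝ ∞ τ) : ContDiff ℝ ∞ (Sfun ν μ τ) :=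
  (contDiff_const.mul contDiff_id).add (contDiff_const.mul
    ((hτ.mul (contDiff_wderivBar (contDiff_conj hτ))).sub
      ((contDiff_conj hτ).mul (contDiff_wderivBar hτ))))

theorem contDiff_Atop (hτ : ContDiff ℝ ∞ τ) (hf : ContDiff ℝ ∞ f) :
    ContDiff ℝ ∞ (Atop ν μ τ f) :=
  (contDiff_wderiv hf).neg.add ((contDiff_conj (contDiff_Sfun hτ)).mul hf)

theorem conj_lap (hf : ContDiff ℝ 2 f) (z : ℂ) :
    conj (lap f z) = lap (fun w => conj (f w)) z := by
  have hdel : (fun w => conj (wderivBar f w)) = wderiv (fun w => conj (f w)) := by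
    ext w; rw [wderiv_conj]
  rw [lap, lap, map_mul, map_ofNat, ← wderivBar_conj, hdel,
    wderiv_wderivBar_comm (contDiff_conj hf)]

theorem wderiv_Sfun (hτ : ContDiff ℝ ∞ τ) (z : ℂ) :
    wderiv (Sfun ν μ τ) z = Bfun ν μ τ z
      + (μ / 4 : ℂ) * (τ z * lap (fun w => conj (τ w)) z - conj (τ z) * lap τ z) := by
  have dτ : DifferentiableAt ℝ τ z := hτ.differentiable (by simp) z
  have dτc : DifferentiableAt ℝ (fun w => conj (τ w)) z :=
    (contDiff_conj hτ).differentiable (by simp) z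
  have dWτ : DifferentiableAt ℝ (wderivBar τ) z :=
    (contDiff_wderivBar hτ).differentiable (by simp) z
  have dWτc : DifferentiableAt ℝ (wderivBar (fun w => conj (τ w))) z :=
    (contDiff_wderivBar (contDiff_conj hτ)).differentiable (by simp) z
  have hsq (a : ℂ) : a * conj a = ((‖a‖ ^ 2 : ℝ) : ℂ) := by
    rw [mul_conj, normSq_eq_norm_sq]
  have hS : Sfun ν μ τ = fun w => ν * w + μ *
      (τ w * wderivBar (fun u => conj (τ u)) w - conj (τ w) * wderivBar τ w) := rfl
  have dA := dτ.fun_mul dWτc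
  have dB := dτc.fun_mul dWτ
  rw [hS, wderiv_add (differentiableAt_fun_id.const_mul _) ((dA.fun_sub dB).const_mul _),
    wderiv_const_mul _ differentiableAt_fun_id, wderiv_id, wderiv_const_mul _ (dA.fun_sub dB),
    wderiv_sub dA dB, wderiv_mul dτ dWτc, wderiv_mul dτc dWτ, wderiv_conj, wderivBar_conj,
    Bfun, lap, lap, hsq, mul_comm (conj _), hsq]
  push_cast
  ring

theorem wderiv_Sfun_add_conj (hτ : ContDiff ℝ ∞ τ) (z : ℂ) :
    wderiv (Sfun ν μ τ) z + conj (wderiv (Sfun ν μ τ) z) = 2 * Bfun ν μ τ z := by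
  have hlap : conj (lap (fun w => conj (τ w)) z) = lap τ z := by
    rw [conj_lap (contDiff_conj (contDiff_infty.1 hτ 2))]
    simp only [conj_conj]
  rw [wderiv_Sfun hτ, map_add, map_mul, map_sub, map_mul, map_mul, hlap,
    conj_lap (contDiff_infty.1 hτ 2), conj_conj, map_div₀, conj_ofReal, conj_ofReal, map_ofNat]
  ring

theorem Lop_eq_Atop_Aop_add (hτ : ContDiff ℝ ∞ τ) (hf : ContDiff ℝ ∞ f) (z : ℂ) :
    Lop ν μ τ f z = Atop ν μ τ (Aop ν μ τ f) z + Bfun ν μ τ z * f z := by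
  have df : DifferentiableAt ℝ f z := hf.differentiable (by simp) z
  have dWf : DifferentiableAt ℝ (wderivBar f) z :=
    (contDiff_wderivBar hf).differentiable (by simp) z
  have dS : DifferentiableAt ℝ (Sfun ν μ τ) z := (contDiff_Sfun hτ).differentiable (by simp) z
  have hA : Aop ν μ τ f = fun w => wderivBar f w + Sfun ν μ τ w * f w := rfl
  rw [Atop, hA]
  dsimp only
  rw [wderiv_add dWf (dS.fun_mul df), wderiv_mul dS df, wderiv_Sfun hτ, Lop,
    ← mul_conj', mul_comm]
  ring

theorem Aop_Atop_eq_Atop_Aop_add (hτ : ContDiff ℝ ∞ τ) (hf : ContDiff ℝ ∞ f) (z : ℂ) :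
    Aop ν μ τ (Atop ν μ τ f) z = Atop ν μ τ (Aop ν μ τ f) z + 2 * Bfun ν μ τ z * f z := by
  have df : DifferentiableAt ℝ f z := hf.differentiable (by simp) z
  have dWf : DifferentiableAt ℝ (wderiv f) z := (contDiff_wderiv hf).differentiable (by simp) z
  have dWbf : DifferentiableAt ℝ (wderivBar f) z :=
    (contDiff_wderivBar hf).differentiable (by simp) z
  have dS : DifferentiableAt ℝ (Sfun ν μ τ) z := (contDiff_Sfun hτ).differentiable (by simp) z
  have dSc : DifferentiableAt ℝ (fun w => conj (Sfun ν μ τ w)) z :=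
    (contDiff_conj (contDiff_Sfun hτ)).differentiable (by simp) z
  have hA : Aop ν μ τ f = fun w => wderivBar f w + Sfun ν μ τ w * f w := rfl
  have hA' : Atop ν μ τ f = fun w => -wderiv f w + conj (Sfun ν μ τ w) * f w := rfl
  rw [Aop, Atop, Atop, hA, hA', wderivBar_add dWf.fun_neg (dSc.fun_mul df), wderivBar_neg,
    wderivBar_mul dSc df, wderivBar_conj, wderiv_add dWbf (dS.fun_mul df), wderiv_mul dS df,
    ← wderiv_wderivBar_comm (contDiff_infty.1 hf 2), ← wderiv_Sfun_add_conj hτ z]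
  ring

end MagneticOperators

def groundState (B : ℝ) (φ : ℂ → ℝ) (n : ℕ) : ℂ → ℂ :=
  fun w => w ^ n * exp (-((B * ‖w‖ ^ 2 : ℝ) : ℂ) - I * (φ w : ℂ))

section GroundState

variable {ν μ B : ℝ} {τ : ℂ → ℂ} {φ : ℂ → ℝ} {n : ℕ} {z : ℂ}

theorem contDiff_groundState (hφ : ContDiff ℝ ∞ φ) : ContDiff ℝ ∞ (groundState B φ n) := by
  have hnorm : ContDiff ℝ ∞ (fun w : ℂ => ((B * ‖w‖ ^ 2 : ℝ) : ℂ)) :=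
    ofRealCLM.contDiff.comp (contDiff_const.mul (contDiff_norm_sq ℝ))
  exact (contDiff_id.pow n).mul
    ((hnorm.neg.sub (contDiff_const.mul (ofRealCLM.contDiff.comp hφ))).cexp)

theorem Aop_groundState (hφ : DifferentiableAt ℝ φ z)
    (hgauge : wderivBar (fun w => (φ w : ℂ)) z = -I * (Sfun ν μ τ z - B * z)) :
    Aop ν μ τ (groundState B φ n) z = 0 := by
  have hnorm : (fun w : ℂ => -((B * ‖w‖ ^ 2 : ℝ) : ℂ) - I * φ w)
      = fun w => -(B * (w * conj w)) - I * φ w := by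
    ext w
    rw [mul_conj, normSq_eq_norm_sq]
    push_cast
    ring
  have dconj : DifferentiableAt ℝ (fun w : ℂ => conj w) z := conjCLE.differentiableAt
  have dq : DifferentiableAt ℝ (fun w : ℂ => w * conj w) z :=
    differentiableAt_fun_id.fun_mul dconj
  have dφ : DifferentiableAt ℝ (fun w => (φ w : ℂ)) z := ofRealCLM.differentiableAt.comp z hφ
  have dexp : DifferentiableAt ℝ (fun w : ℂ => -((B * ‖w‖ ^ 2 : ℝ) : ℂ) - I * φ w) z := by
    rw [hnorm]
    exact (dq.const_mul _).fun_neg.fun_sub (dφ.const_mul _)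
  have hexp : wderivBar (fun w : ℂ => -((B * ‖w‖ ^ 2 : ℝ) : ℂ) - I * φ w) z = -Sfun ν μ τ z := by
    rw [hnorm, wderivBar_sub (dq.const_mul _).fun_neg (dφ.const_mul _), wderivBar_neg,
      wderivBar_const_mul _ dq, wderivBar_mul differentiableAt_fun_id dconj,
      wderivBar_id, wderivBar_conj_id, wderivBar_const_mul _ dφ, hgauge, ← mul_assoc,
      mul_neg, I_mul_I]
    ring
  have dpow : DifferentiableAt ℂ (fun w : ℂ => w ^ n) z := differentiableAt_pow n
  rw [Aop]
  unfold groundState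
  rw [wderivBar_mul (dpow.restrictScalars ℝ) dexp.cexp, wderivBar_eq_zero_of_differentiableAt dpow,
    wderivBar_exp dexp, hexp]
  ring

end GroundState

section LandauLevels

variable {ν μ B : ℝ} {τ f : ℂ → ℂ}

theorem AtopIter_succ (m : ℕ) (f : ℂ → ℂ) :
    AtopIter ν μ τ (m + 1) f = Atop ν μ τ (AtopIter ν μ τ m f) :=
  Function.iterate_succ_apply' _ _ _

theorem contDiff_AtopIter (hτ : ContDiff ℝ ∞ τ) (hf : ContDiff ℝ ∞ f) (m : ℕ) :
    ContDiff ℝ ∞ (AtopIter ν μ τ m f) := by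
  induction m with
  | zero => exact hf
  | succ m ih => rw [AtopIter_succ]; exact contDiff_Atop hτ ih

theorem Atop_const_mul (c : ℂ) {z : ℂ} (hf : DifferentiableAt ℝ f z) :
    Atop ν μ τ (fun w => c * f w) z = c * Atop ν μ τ f z := by
  rw [Atop, Atop, wderiv_const_mul c hf]
  ring

theorem Atop_Aop_AtopIter (hτ : ContDiff ℝ ∞ τ) (hB : ∀ z, Bfun ν μ τ z = B)
    (hf : ContDiff ℝ ∞ f) (hA : ∀ z, Aop ν μ τ f z = 0) (m : ℕ) (z : ℂ) :
    Atop ν μ τ (Aop ν μ τ (AtopIter ν μ τ m f)) z = 2 * m * B * AtopIter ν μ τ m f z := by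
  induction m generalizing z with
  | zero =>
    have hA0 : Aop ν μ τ f = fun w => 0 * f w := funext fun w => by rw [hA w, zero_mul]
    rw [AtopIter, Function.iterate_zero_apply, hA0,
      Atop_const_mul 0 (hf.differentiable (by simp) z)]
    simp
  | succ m ih =>
    have hg := contDiff_AtopIter (ν := ν) (μ := μ) hτ hf m
    have hAg : Aop ν μ τ (Atop ν μ τ (AtopIter ν μ τ m f))
        = fun w => (2 * (m + 1) * B : ℂ) * AtopIter ν μ τ m f w := by
      ext w
      rw [Aop_Atop_eq_Atop_Aop_add hτ hg, ih, hB]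
      ring
    rw [AtopIter_succ, hAg, Atop_const_mul _ (hg.differentiable (by simp) z)]
    push_cast
    ring

end LandauLevels

theorem statement19_general (ν μ : ℝ) (τ : ℂ → ℂ) (hτ : ContDiff ℝ (⊤ : ℕ∞) τ)
    (B : ℝ) (hB : ∀ z : ℂ, Bfun ν μ τ z = B)
    (φ : ℂ → ℝ) (hφs : ContDiff ℝ (⊤ : ℕ∞) φ)
    (hφ : ∀ z : ℂ, wderivBar (fun w => (φ w : ℂ)) z = -Complex.I * (Sfun ν μ τ z - (B : ℂ) * z))
    (m n : ℕ) (z : ℂ) :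
    Lop ν μ τ (AtopIter ν μ τ m (fun w => w ^ n * Complex.exp (-((B * ‖w‖ ^ 2 : ℝ) : ℂ) - Complex.I * (φ w : ℂ)))) z
      = ((B * (2 * (m : ℝ) + 1) : ℝ) : ℂ) * AtopIter ν μ τ m (fun w => w ^ n * Complex.exp (-((B * ‖w‖ ^ 2 : ℝ) : ℂ) - Complex.I * (φ w : ℂ))) z := by
  have hψ : ContDiff ℝ ∞ (groundState B φ n) := contDiff_groundState hφs
  have hAψ (z : ℂ) : Aop ν μ τ (groundState B φ n) z = 0 :=
    Aop_groundState (hφs.differentiable (by simp) z) (hφ z)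
  change Lop ν μ τ (AtopIter ν μ τ m (groundState B φ n)) z
    = _ * AtopIter ν μ τ m (groundState B φ n) z
  rw [Lop_eq_Atop_Aop_add hτ (contDiff_AtopIter hτ hψ m), hB,
    Atop_Aop_AtopIter hτ hB hψ hAψ]
  push_cast
  ring

theorem statement19 (ν μ : ℝ) (hν : 0 < ν) (hμ : 0 < μ) (τ : ℂ → ℂ) (hτ : ContDiff ℝ (⊤ : ℕ∞) τ)
    (B : ℝ) (hB : ∀ z : ℂ, Bfun ν μ τ z = B)
    (φ : ℂ → ℝ) (hφs : ContDiff ℝ (⊤ : ℕ∞) φ) (hφ0 : φ 0 = 0)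
    (hφ : ∀ z : ℂ, wderivBar (fun w => (φ w : ℂ)) z = -Complex.I * (Sfun ν μ τ z - (B : ℂ) * z))
    (m n : ℕ) (z : ℂ) :
    Lop ν μ τ (AtopIter ν μ τ m (fun w => w ^ n * Complex.exp (-((B * ‖w‖ ^ 2 : ℝ) : ℂ) - Complex.I * (φ w : ℂ)))) z
      = ((B * (2 * (m : ℝ) + 1) : ℝ) : ℂ) * AtopIter ν μ τ m (fun w => w ^ n * Complex.exp (-((B * ‖w‖ ^ 2 : ℝ) : ℂ) - Complex.I * (φ w : ℂ))) z :=
  statement19_general ν μ τ hτ B hB φ hφs hφ m n z
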